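/- Let G be a finite connected simple graph. Then 0 is a root of the Laplacian matching polynomial 𝓛𝓜(G, x) if and only if G is a tree (i.e., G is connected and acyclic). -/

import Mathlib

/-!
At `x = 0` an uncovered vertex contributes `-d(v)`, and a matching `M` covers `2|M|` vertices, so
`𝓛𝓜(G, 0) = (-1)^n ∑_M (-1)^|M| ∏_{v ∉ V(M)} d(v)`. Since `d(v)` counts the edges at `v`,
inclusion–exclusion over the set of edges chosen by both of their endpoints shows that this sum
counts the injective maps choosing for every vertex an edge at it. A tree has fewer edges than
vertices, so it admits no such map; a connected graph that is not a tree has a spanning tree and an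
edge `s(a, b)` outside it, and orienting the tree towards `a` while giving `a` the edge `s(a, b)`
yields one.
-/

namespace LM

open Finset

variable {V : Type*}

def matchings [Fintype V] [DecidableEq V] (G : SimpleGraph V) [DecidableRel G.Adj] :
    Finset (Finset (Sym2 V)) :=
  G.edgeFinset.powerset.filter
    (fun M => ∀ e ∈ M, ∀ f ∈ M, e ≠ f → ∀ w : V, w ∈ e → w ∉ f)

def covered [Fintype V] [DecidableEq V] (M : Finset (Sym2 V)) : Finset V :=
  Finset.univ.filter (fun v => ∃ e ∈ M, v ∈ e)

/-- The multivariate matching polynomial `𝔐(G, x_G)`. -/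
noncomputable def mvMatch [Fintype V] [DecidableEq V] (G : SimpleGraph V)
    [DecidableRel G.Adj] : MvPolynomial V ℝ :=
  ∑ M ∈ matchings G, (-1 : MvPolynomial V ℝ) ^ M.card *
    ∏ v ∈ Finset.univ \ covered M, MvPolynomial.X v

/-- The matching polynomial `𝓜(G, x)`. -/
noncomputable def matchPoly [Fintype V] [DecidableEq V] (G : SimpleGraph V)
    [DecidableRel G.Adj] : Polynomial ℝ :=
  ∑ M ∈ matchings G, (-1 : Polynomial ℝ) ^ M.card *
    Polynomial.X ^ (Fintype.card V - 2 * M.card)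

/-- The Laplacian matching polynomial `𝓛𝓜(G, x)`. -/
noncomputable def lapMatch [Fintype V] [DecidableEq V] (G : SimpleGraph V)
    [DecidableRel G.Adj] : Polynomial ℝ :=
  ∑ M ∈ matchings G, (-1 : Polynomial ℝ) ^ M.card *
    ∏ v ∈ Finset.univ \ covered M, (Polynomial.X - Polynomial.C (G.degree v : ℝ))

noncomputable def lroot (p : Polynomial ℝ) : ℝ := sSup {x : ℝ | p.IsRoot x}

instance instDecidableRelInduceAdj (G : SimpleGraph V) [DecidableRel G.Adj] (s : Set V) :
    DecidableRel (G.induce s).Adj := fun a b =>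
  inferInstanceAs (Decidable (G.Adj a b))

end LM

namespace Finset

variable {α ι : Type*} [DecidableEq ι]

theorem card_filter_eq_empty_eq_sum_powerset (s : Finset α) (U : Finset ι) (B : α → Finset ι)
    (hB : ∀ a ∈ s, B a ⊆ U) :
    (#{a ∈ s | B a = ∅} : ℤ) = ∑ t ∈ U.powerset, (-1 : ℤ) ^ #t * #{a ∈ s | t ⊆ B a} := by
  have inner : ∀ a ∈ s, ∑ t ∈ U.powerset, (if t ⊆ B a then (-1 : ℤ) ^ #t else 0) =
      if B a = ∅ then 1 else 0 := by
    intro a ha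
    rw [← sum_filter, ← sum_powerset_neg_one_pow_card (x := B a)]
    congr 1
    ext t
    simp only [mem_filter, mem_powerset]
    exact ⟨And.right, fun h => ⟨h.trans (hB a ha), h⟩⟩
  simp_rw [card_filter, Nat.cast_sum, mul_sum, Nat.cast_ite, Nat.cast_one, Nat.cast_zero,
    mul_ite, mul_one, mul_zero]
  rw [sum_comm]
  exact (sum_congr rfl inner).symm

end Finset

namespace Fintype

variable {α : Type*} {δ : α → Type*} [DecidableEq α] [Fintype α]

theorem filter_piFinset_forall (t : ∀ a, Finset (δ a)) (P : ∀ a, δ a → Prop)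
    [∀ a, DecidablePred (P a)] :
    {f ∈ piFinset t | ∀ a, P a (f a)} = piFinset fun a => {x ∈ t a | P a x} := by
  ext f
  simp [forall_and]

end Fintype

namespace SimpleGraph

variable {V : Type*} {G : SimpleGraph V}

theorem Connected.exists_adj_dist_lt (hG : G.Connected) {v r : V} (hv : v ≠ r) :
    ∃ w, G.Adj v w ∧ G.dist w r < G.dist v r := by
  obtain ⟨p, hp⟩ := hG.exists_walk_length_eq_dist v r
  cases p with
  | nil => exact absurd rfl hv
  | cons hadj q =>
    refine ⟨_, hadj, ?_⟩
    have := G.dist_le q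
    rw [Walk.length_cons] at hp
    omega

theorem IsTree.not_injective_of_mem_incidenceSet [Finite V] (hG : G.IsTree)
    {f : V → Sym2 V} (hf : ∀ v, f v ∈ G.incidenceSet v) : ¬ Function.Injective f := by
  intro hinj
  have hle : Nat.card V ≤ Nat.card G.edgeSet :=
    Nat.card_le_card_of_injective (fun v => ⟨f v, (hf v).1⟩)
      fun u v huv => hinj (congrArg Subtype.val huv)
  have hcard := (isTree_iff_connected_and_card.1 hG).2
  omega

theorem Connected.exists_injective_mem_incidenceSet (hG : G.Connected) (hT : ¬ G.IsTree) :
    ∃ f : V → Sym2 V, Function.Injective f ∧ ∀ v, f v ∈ G.incidenceSet v := by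
  classical
  obtain ⟨T, hTG, hTtree⟩ := hG.exists_isTree_le
  obtain ⟨a, b, hab, habT⟩ : ∃ a b, G.Adj a b ∧ ¬ T.Adj a b := by
    by_contra! h
    exact hT (le_antisymm hTG (fun a b => h a b) ▸ hTtree)
  choose p hp using fun v (hv : v ≠ a) => hTtree.connected.exists_adj_dist_lt hv
  have not_tree_edge : ∀ v (hv : v ≠ a), s(a, b) ≠ s(v, p v hv) := fun v hv h =>
    habT (by rw [← mem_edgeSet, h]; exact (hp v hv).1)
  refine ⟨fun v => if hv : v = a then s(a, b) else s(v, p v hv), ?_, fun v => ?_⟩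
  · intro u v huv
    by_cases hu : u = a <;> by_cases hv : v = a <;>
      simp only [hu, hv, dite_true, dite_false] at huv
    · exact hu.trans hv.symm
    · exact absurd huv (not_tree_edge v hv)
    · exact absurd huv.symm (not_tree_edge u hu)
    · rcases Sym2.eq_iff.1 huv with ⟨h, -⟩ | ⟨hpv, hpu⟩
      · exact h
      · have h₁ := (hp u hu).2
        have h₂ := (hp v hv).2
        rw [hpu] at h₁
        rw [← hpv] at h₂
        omega
  · by_cases hv : v = a
    · subst hv
      simpa using hab
    · simpa [hv] using hTG (hp v hv).1

end SimpleGraph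

namespace LM

open Finset

variable {V : Type*}

section

variable [Fintype V] [DecidableEq V] (G : SimpleGraph V) [DecidableRel G.Adj]

theorem mem_covered {M : Finset (Sym2 V)} {v : V} : v ∈ covered M ↔ ∃ e ∈ M, v ∈ e := by
  simp [covered]

theorem mem_matchings {M : Finset (Sym2 V)} :
    M ∈ matchings G ↔ M ⊆ G.edgeFinset ∧ ∀ e ∈ M, ∀ f ∈ M, e ≠ f → ∀ w, w ∈ e → w ∉ f := by
  simp [matchings]

theorem card_covered_of_mem_matchings {M : Finset (Sym2 V)} (hM : M ∈ matchings G) :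
    #(covered M) = 2 * #M := by
  rw [mem_matchings] at hM
  have hbUnion : covered M = M.biUnion Sym2.toFinset := by
    ext v
    simp [mem_covered]
  rw [hbUnion, card_biUnion fun e he f hf hef => disjoint_left.2 fun w hwe hwf => by
    simp only [Sym2.mem_toFinset] at hwe hwf
    exact hM.2 e he f hf hef w hwe hwf]
  rw [sum_congr rfl fun e he => Sym2.card_toFinset_of_not_isDiag e
    (G.not_isDiag_of_mem_edgeSet (SimpleGraph.mem_edgeFinset.1 (hM.1 he))), sum_const,
    smul_eq_mul, mul_comm]

theorem eval_zero_lapMatch : (lapMatch G).eval 0 = (-1) ^ Fintype.card V *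
    ∑ M ∈ matchings G, (-1) ^ #M * ∏ v ∈ univ \ covered M, (G.degree v : ℝ) := by
  simp only [lapMatch, Polynomial.eval_finsetSum, Polynomial.eval_mul, Polynomial.eval_pow,
    Polynomial.eval_neg, Polynomial.eval_one, Polynomial.eval_prod, Polynomial.eval_sub,
    Polynomial.eval_X, Polynomial.eval_C, zero_sub, mul_sum]
  refine sum_congr rfl fun M hM => ?_
  have hcard : #(univ \ covered M) + 2 * #M = Fintype.card V := by
    rw [← card_covered_of_mem_matchings G hM, card_sdiff_add_card_eq_card (subset_univ _),
      card_univ]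
  rw [prod_neg, ← hcard, pow_add, pow_mul]
  ring

def incidenceChoices : Finset (V → Sym2 V) :=
  Fintype.piFinset fun v => G.incidenceFinset v

theorem mem_incidenceChoices {f : V → Sym2 V} :
    f ∈ incidenceChoices G ↔ ∀ v, f v ∈ G.incidenceSet v := by
  simp [incidenceChoices]

def doubledEdges (f : V → Sym2 V) : Finset (Sym2 V) :=
  {e ∈ G.edgeFinset | ∀ v ∈ e, f v = e}

variable {G}

theorem doubledEdges_eq_empty_iff {f : V → Sym2 V} (hf : f ∈ incidenceChoices G) :
    doubledEdges G f = ∅ ↔ Function.Injective f := by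
  rw [mem_incidenceChoices] at hf
  rw [eq_empty_iff_forall_notMem]
  constructor
  · intro h u w huw
    by_contra hne
    have hfu : f u = s(u, w) := Sym2.eq_of_ne_mem hne (hf u).2 (huw ▸ (hf w).2)
      (Sym2.mem_mk_left u w) (Sym2.mem_mk_right u w)
    refine h (f u) (mem_filter.2 ⟨SimpleGraph.mem_edgeFinset.2 (hf u).1, fun v hv => ?_⟩)
    rcases Sym2.mem_iff.1 (hfu ▸ hv) with rfl | rfl
    exacts [rfl, huw.symm]
  · intro hinj e he
    obtain ⟨heG, hfe⟩ := mem_filter.1 he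
    induction e using Sym2.ind with
    | _ u w =>
      exact G.ne_of_adj (SimpleGraph.mem_edgeFinset.1 heG)
        (hinj ((hfe u (Sym2.mem_mk_left u w)).trans (hfe w (Sym2.mem_mk_right u w)).symm))

theorem card_filter_subset_doubledEdges {S : Finset (Sym2 V)} (hS : S ⊆ G.edgeFinset) :
    #{f ∈ incidenceChoices G | S ⊆ doubledEdges G f} =
      ∏ v, #{e ∈ G.incidenceFinset v | ∀ e' ∈ S, v ∈ e' → e = e'} := by
  rw [← Fintype.card_piFinset, ← Fintype.filter_piFinset_forall, incidenceChoices]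
  congr 1
  refine filter_congr fun f _ => ?_
  simp only [doubledEdges, subset_iff, mem_filter]
  exact ⟨fun h v e' he' hv => (h he').2 v hv,
    fun h e' he' => ⟨hS he', fun v hv => h v e' he' hv⟩⟩

theorem prod_card_filter_incidenceFinset_of_mem_matchings {M : Finset (Sym2 V)}
    (hM : M ∈ matchings G) :
    ∏ v, #{e ∈ G.incidenceFinset v | ∀ e' ∈ M, v ∈ e' → e = e'} =
      ∏ v ∈ univ \ covered M, G.degree v := by
  rw [mem_matchings] at hM
  rw [← prod_sdiff (subset_univ (covered M)), prod_eq_one (s := covered M) fun v hv => ?_,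
    mul_one]
  · refine prod_congr rfl fun v hv => ?_
    have hv' : ∀ e' ∈ M, v ∉ e' := fun e' he' hve' =>
      (mem_sdiff.1 hv).2 (mem_covered.2 ⟨e', he', hve'⟩)
    rw [filter_true_of_mem fun e _ e' he' hve' => absurd hve' (hv' e' he'),
      SimpleGraph.card_incidenceFinset_eq_degree]
  · obtain ⟨e₀, he₀, hve₀⟩ := mem_covered.1 hv
    refine card_eq_one.2 ⟨e₀, eq_singleton_iff_unique_mem.2 ⟨?_, fun e he =>
      (mem_filter.1 he).2 e₀ he₀ hve₀⟩⟩
    refine mem_filter.2 ⟨(G.mem_incidenceFinset v e₀).2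
      ⟨SimpleGraph.mem_edgeFinset.1 (hM.1 he₀), hve₀⟩, fun e' he' hve' => ?_⟩
    by_contra hne
    exact hM.2 e₀ he₀ e' he' hne v hve₀ hve'

theorem prod_card_filter_incidenceFinset_of_notMem_matchings {S : Finset (Sym2 V)}
    (hS : S ⊆ G.edgeFinset) (hSM : S ∉ matchings G) :
    ∏ v, #{e ∈ G.incidenceFinset v | ∀ e' ∈ S, v ∈ e' → e = e'} = 0 := by
  simp only [mem_matchings, hS, true_and, not_forall, not_not] at hSM
  obtain ⟨e₁, he₁, e₂, he₂, hne, w, hw₁, hw₂⟩ := hSM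
  refine prod_eq_zero (mem_univ w) (card_eq_zero.2 (filter_eq_empty_iff.2 fun e _ h => ?_))
  exact hne ((h e₁ he₁ hw₁).symm.trans (h e₂ he₂ hw₂))

variable (G) in
theorem card_filter_injective_incidenceChoices :
    (#{f ∈ incidenceChoices G | Function.Injective f} : ℤ) =
      ∑ M ∈ matchings G, (-1) ^ #M * ∏ v ∈ univ \ covered M, (G.degree v : ℤ) := by
  calc (#{f ∈ incidenceChoices G | Function.Injective f} : ℤ)
      = #{f ∈ incidenceChoices G | doubledEdges G f = ∅} := by
        rw [filter_congr fun f hf => (doubledEdges_eq_empty_iff hf).symm]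
    _ = ∑ S ∈ G.edgeFinset.powerset,
          (-1 : ℤ) ^ #S * #{f ∈ incidenceChoices G | S ⊆ doubledEdges G f} :=
        card_filter_eq_empty_eq_sum_powerset _ _ _ fun f _ => filter_subset _ _
    _ = ∑ S ∈ G.edgeFinset.powerset, (-1 : ℤ) ^ #S *
          ((∏ v, #{e ∈ G.incidenceFinset v | ∀ e' ∈ S, v ∈ e' → e = e'} : ℕ) : ℤ) :=
        sum_congr rfl fun S hS => by
          rw [card_filter_subset_doubledEdges (mem_powerset.1 hS)]
    _ = ∑ M ∈ matchings G, (-1 : ℤ) ^ #M *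
          ((∏ v, #{e ∈ G.incidenceFinset v | ∀ e' ∈ M, v ∈ e' → e = e'} : ℕ) : ℤ) := by
        refine (sum_subset (filter_subset _ _) fun S hS hSM => ?_).symm
        rw [prod_card_filter_incidenceFinset_of_notMem_matchings (mem_powerset.1 hS) hSM,
          Nat.cast_zero, mul_zero]
    _ = _ := sum_congr rfl fun M hM => by
        rw [prod_card_filter_incidenceFinset_of_mem_matchings hM, Nat.cast_prod]

variable (G) in
theorem eval_zero_lapMatch_eq_card : (lapMatch G).eval 0 =
    (-1) ^ Fintype.card V * (#{f ∈ incidenceChoices G | Function.Injective f} : ℝ) := by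
  rw [eval_zero_lapMatch, ← Int.cast_natCast, card_filter_injective_incidenceChoices]
  push_cast
  rfl

end

/-- For a finite connected graph `G`, `0` is a root of the Laplacian
matching polynomial `𝓛𝓜(G, x)` if and only if `G` is a tree. -/
theorem lapMatch_isRoot_zero_iff_isTree [Fintype V] [DecidableEq V] (G : SimpleGraph V)
    [DecidableRel G.Adj] (hG : G.Connected) :
    (lapMatch G).IsRoot 0 ↔ G.IsTree := by
  have injective_iff : (∃ f ∈ incidenceChoices G, Function.Injective f) ↔ ¬ G.IsTree := by
    simp only [mem_incidenceChoices]
    exact ⟨fun ⟨f, hf, hinj⟩ hT => hT.not_injective_of_mem_incidenceSet hf hinj,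
      fun hT => (hG.exists_injective_mem_incidenceSet hT).imp fun f h => h.symm⟩
  rw [← not_iff_not, ← injective_iff, ← filter_nonempty_iff, ← card_pos,
    Polynomial.IsRoot.def, eval_zero_lapMatch_eq_card]
  simp [pos_iff_ne_zero]

end LM
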